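/- arXiv:1510.07930 — 2 statements merged into one kernel-verified Lean document; each statement's English description precedes it below -/
import Mathlib

section
/- Let α be a real number with 0 ≤ α ≤ 1. The value (2 + α(1+α))/(3+α) is the greatest element of the set {d1 + d2 : (d1,d2) ∈ ℝ², d1 ≥ 0, d2 ≥ 0, 3(1+α)d1 + 2d2 ≤ 2(1+α), α(3−α)d1 + 6d2 ≤ 4α}; it is attained at the point (2/(3+α), α(1+α)/(3+α)). -/
/-- `(2 + α(1+α))/(3+α)` is the greatest value of `d1 + d2` over the Proposition 3
inner-bound region, attained at `(2/(3+α), α(1+α)/(3+α))`. -/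
theorem stmt_8 (α : ℝ) (hα0 : 0 ≤ α) (hα1 : α ≤ 1) :
    IsGreatest
      {x : ℝ | ∃ d1 d2 : ℝ, 0 ≤ d1 ∧ 0 ≤ d2 ∧
        3 * (1 + α) * d1 + 2 * d2 ≤ 2 * (1 + α) ∧
        α * (3 - α) * d1 + 6 * d2 ≤ 4 * α ∧
        x = d1 + d2}
      ((2 + α * (1 + α)) / (3 + α)) ∧
    2 / (3 + α) + α * (1 + α) / (3 + α) = (2 + α * (1 + α)) / (3 + α) := by
  have h3 : (0:ℝ) < 3 + α := by linarith
  have h3' : (3 + α) ≠ 0 := ne_of_gt h3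
  refine ⟨⟨⟨2 / (3 + α), α * (1 + α) / (3 + α), by positivity, by positivity, ?_, ?_, ?_⟩, ?_⟩, ?_⟩
  · have : 3 * (1 + α) * (2 / (3 + α)) + 2 * (α * (1 + α) / (3 + α)) = 2 * (1 + α) := by
      field_simp
    linarith
  · have : α * (3 - α) * (2 / (3 + α)) + 6 * (α * (1 + α) / (3 + α)) = 4 * α := by
      field_simp; ring
    linarith
  · field_simp
  · rintro x ⟨d1, d2, hd1, hd2, hc1, hc2, rfl⟩
    rw [le_div_iff₀ h3]
    nlinarith [mul_le_mul_of_nonneg_left hc1 (show (0:ℝ) ≤ α^2 - 3*α + 6 by nlinarith),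
      mul_le_mul_of_nonneg_left hc2 (show (0:ℝ) ≤ 3*α + 1 by linarith)]
  · field_simp
end

section
/- Let α be a real number with 0 ≤ α ≤ 1. The value (3+α)/4 is the greatest element of the set {d1 + d2 : (d1,d2) ∈ ℝ², d1 ≥ 0, d2 ≥ 0, 6d1 + (1+α)d2 ≤ 2(1+α), 2(2α−1)d1 + 3(1+α)d2 ≤ (1+α)²}; it is attained at the point ((1+α)/4, 1/2). -/
/-- `(3+α)/4` is the greatest value of `d1 + d2` over the Proposition 4
inner-bound region, attained at `((1+α)/4, 1/2)`. -/
theorem stmt_12 (α : ℝ) (hα0 : 0 ≤ α) (hα1 : α ≤ 1) :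
    IsGreatest
      {x : ℝ | ∃ d1 d2 : ℝ, 0 ≤ d1 ∧ 0 ≤ d2 ∧
        6 * d1 + (1 + α) * d2 ≤ 2 * (1 + α) ∧
        2 * (2 * α - 1) * d1 + 3 * (1 + α) * d2 ≤ (1 + α) ^ 2 ∧
        x = d1 + d2}
      ((3 + α) / 4) ∧
    (1 + α) / 4 + 1 / 2 = (3 + α) / 4 := by
  refine ⟨⟨⟨(1 + α) / 4, 1 / 2, by linarith, by norm_num, by nlinarith, by nlinarith, by ring⟩, ?_⟩, by ring⟩
  rintro x ⟨d1, d2, h1, h2, h3, h4, rfl⟩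
  nlinarith [mul_nonneg hα0 h1, mul_nonneg hα0 h2]
end
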